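/- arXiv:2504.19512 — 2 statements merged into one kernel-verified Lean document; each statement's English description precedes it below -/
import Mathlib

section
/- Let G be a finite group and H ≤ G a subgroup. Define the element Â_H := (1/|H|)·Σ_{h₁∈H} Σ_{h₂∈H} F^{h₁,h₂} of the ribbon algebra of G. Then: (1) Â_H * Â_H = Â_H; (2) Â_H * Ω = Ω; (3) 𝐒[Â_H] = Â_H; (4) 𝐓[Â_H] = Â_H. -/
/-!
Statement 0: For a finite group `G` and a subgroup `H ≤ G`, the element
`Â_H := (1/|H|)·Σ_{h₁∈H} Σ_{h₂∈H} F^{h₁,h₂}` of the ribbon algebra of `G` satisfies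
(1) `Â_H * Â_H = Â_H`, (2) `Â_H * Ω = Ω`, (3) `𝐒[Â_H] = Â_H`, (4) `𝐓[Â_H] = Â_H`.
-/

open scoped Classical

noncomputable section

/-- `F^{g,h}`: the indicator function of the pair `(g,h)`, a basis vector of the ribbon
algebra of `G` (the complex vector space of functions `G × G → ℂ`). -/
def Fgh {G : Type*} (g h : G) : G × G → ℂ := fun x => if x = (g, h) then 1 else 0

/-- The multiplication of the ribbon algebra:
`(f₁ * f₂)(a,b) = Σ_{c ∈ G} f₁(a,c)·f₂(a,c⁻¹·b)`. -/
def rmul {G : Type*} [Group G] [Fintype G] (f₁ f₂ : G × G → ℂ) : G × G → ℂ :=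
  fun x => ∑ c : G, f₁ (x.1, c) * f₂ (x.1, c⁻¹ * x.2)

/-- The S-transformation, determined by `𝐒[F^{g,h}] = F^{h,g⁻¹}`, i.e. `(𝐒f)(a,b) = f(b⁻¹,a)`. -/
def Strans {G : Type*} [Group G] (f : G × G → ℂ) : G × G → ℂ := fun x => f (x.2⁻¹, x.1)

/-- The T-transformation, determined by `𝐓[F^{g,h}] = F^{g,gh}`, i.e. `(𝐓f)(a,b) = f(a,a⁻¹b)`. -/
def Ttrans {G : Type*} [Group G] (f : G × G → ℂ) : G × G → ℂ := fun x => f (x.1, x.1⁻¹ * x.2)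

/-- The Ω-strand `Ω := (1/|G|)·Σ_{g∈G} F^{e,g}`. -/
def Omega (G : Type*) [Group G] [Fintype G] : G × G → ℂ :=
  (Fintype.card G : ℂ)⁻¹ • ∑ g : G, Fgh (1 : G) g

/-- The boundary term `Â_H := (1/|H|)·Σ_{h₁∈H} Σ_{h₂∈H} F^{h₁,h₂}`. -/
def Ahat {G : Type*} [Group G] [Fintype G] (H : Subgroup G) : G × G → ℂ :=
  (Fintype.card H : ℂ)⁻¹ • ∑ h₁ : H, ∑ h₂ : H, Fgh (h₁ : G) (h₂ : G)

/-! `Â_H` is `|H|⁻¹` times the indicator function of `H × H`. As `H` is closed under products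
and inverses, `c⁻¹ b`, `(b⁻¹, a)` and `(a, a⁻¹ b)` lie in `H` exactly when the untwisted
arguments do, so every identity is a pointwise check; in `Â_H * Â_H` the sum over `c ∈ H`
contributes the factor `|H|` that cancels one `|H|⁻¹`, and right multiplication by `Ω` just
scales by `∑_c f(e, c)`, which is `1` for `Â_H`. -/

lemma Fintype.sum_subtype_ite_eq {α M : Type*} [Fintype α] [AddCommMonoid M] {p : α → Prop}
    [Fintype (Subtype p)] (a : α) (c : M) :
    (∑ x : Subtype p, if a = x then c else 0) = if p a then c else 0 := by
  rw [← Finset.sum_subtype (Finset.univ.filter p) (by simp) (fun x => if a = x then c else 0),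
    Finset.sum_ite_eq]
  simp

section RibbonAlgebra

variable {G : Type*} [Group G] [Fintype G]

lemma Ahat_apply (H : Subgroup G) (a b : G) :
    Ahat H (a, b) = if a ∈ H ∧ b ∈ H then (Fintype.card H : ℂ)⁻¹ else 0 := by
  simp only [Ahat, Pi.smul_apply, Finset.sum_apply, Fgh, Prod.mk.injEq, ite_and,
    Finset.sum_ite_irrel, Finset.sum_const_zero, Fintype.sum_subtype_ite_eq, smul_eq_mul]
  split_ifs <;> simp

lemma Omega_apply (a b : G) :
    Omega G (a, b) = if a = 1 then (Fintype.card G : ℂ)⁻¹ else 0 := by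
  simp [Omega, Fgh, ite_and]

lemma rmul_Omega (f : G × G → ℂ) : rmul f (Omega G) = (∑ c, f (1, c)) • Omega G := by
  funext ⟨a, b⟩
  simp only [rmul, Omega_apply, Pi.smul_apply, smul_eq_mul]
  split_ifs with ha
  · rw [ha, Finset.sum_mul]
  · simp

variable (H : Subgroup G)

lemma sum_Ahat_one_apply : ∑ c, Ahat H (1, c) = 1 := by
  simp [Ahat_apply, Finset.sum_ite, ← Fintype.card_subtype, Fintype.card_ne_zero]

lemma Ahat_mul_Ahat : rmul (Ahat H) (Ahat H) = Ahat H := by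
  funext ⟨a, b⟩
  have summand (c : G) :
      Ahat H (a, c) * Ahat H (a, c⁻¹ * b) = Ahat H (1, c) * Ahat H (a, b) := by
    by_cases ha : a ∈ H <;> by_cases hc : c ∈ H <;>
      simp [Ahat_apply, ha, hc, Subgroup.mul_mem_cancel_left]
  simp only [rmul, summand, ← Finset.sum_mul, sum_Ahat_one_apply, one_mul]

lemma Ahat_mul_Omega : rmul (Ahat H) (Omega G) = Omega G := by
  rw [rmul_Omega, sum_Ahat_one_apply, one_smul]

lemma Strans_Ahat : Strans (Ahat H) = Ahat H := by
  funext ⟨a, b⟩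
  simp only [Strans, Ahat_apply, inv_mem_iff, and_comm]

lemma Ttrans_Ahat : Ttrans (Ahat H) = Ahat H := by
  funext ⟨a, b⟩
  by_cases ha : a ∈ H <;> simp [Ttrans, Ahat_apply, ha, Subgroup.mul_mem_cancel_left]

end RibbonAlgebra

/-- Spontaneous-symmetry-breaking boundary terms satisfy the four consistency conditions. -/
theorem ssb_boundary_terms (G : Type*) [Group G] [Fintype G] (H : Subgroup G) :
    rmul (Ahat H) (Ahat H) = Ahat H ∧
    rmul (Ahat H) (Omega G) = Omega G ∧
    Strans (Ahat H) = Ahat H ∧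
    Ttrans (Ahat H) = Ahat H :=
  ⟨Ahat_mul_Ahat H, Ahat_mul_Omega H, Strans_Ahat H, Ttrans_Ahat H⟩

end
end

section
/- Let G be a finite group. Let C₁, C₂ be conjugacy classes of G with chosen representatives r₁ ∈ C₁, r₂ ∈ C₂ and transversals p₁ : C₁ → G, p₂ : C₂ → G (with r₁ = r₂ and p₁ = p₂ whenever C₁ = C₂), let R₁ be an irreducible unitary representation of Z(r₁) and R₂ an irreducible unitary representation of Z(r₂), and let 1 ≤ mᵢ ≤ d_{Rᵢ}, cᵢ ∈ Cᵢ. Then in the ribbon algebra of G: (i) if C₁ ≠ C₂, or c₁ ≠ c₂, or R₁ is not isomorphic to R₂, then P^{[C₁,R₁]}_{m₁,c₁} * P^{[C₂,R₂]}_{m₂,c₂} = 0; (ii) if C₁ = C₂ = C and R₁ = R₂ = R, then P^{[C,R]}_{m₁,c₁} * P^{[C,R]}_{m₂,c₂} = δ_{c₁,c₂}·δ_{m₁,m₂}·P^{[C,R]}_{m₁,c₁}. In particular each P^{[C,R]}_{m,c} is idempotent. -/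
/-!
For fixed `c` and `q = p(c)`, the map `f ↦ Σ_{z ∈ Z(r)} f(z)·F^{c, q z q⁻¹}` turns convolution on
`Z(r)` into ribbon multiplication, while such sums attached to different points `c` multiply to
zero. Each `P^{[C,R]}_{m,c}` is a multiple of the image of `z ↦ conj ρ_{mm}(z)`, so its products
reduce to convolutions of matrix coefficients, i.e. to the Schur orthogonality relations:
`Σ_z ρ₁(z)_{ij} ρ₂(z⁻¹u)_{kl}` is an entry of `S·ρ₂(u)` for the averaged intertwiner
`S = Σ_z ρ₁(z) E_{jk} ρ₂(z⁻¹)`. By Schur's lemma `S = 0` when `ρ₁ ≇ ρ₂`, and when `ρ₁ = ρ₂` it is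
the scalar `δ_{jk}·|Z(r)|/d`, as comparing traces shows. The normalisation `|C|·d/|G|` then makes
the diagonal operators idempotent because `|C|·|Z(r)| = |G|`.
-/

open scoped Classical

noncomputable section

/-- The conjugacy class of `r` in `G`, as a `Finset`. -/
def conjClass {G : Type*} [Group G] [Fintype G] (r : G) : Finset G :=
  Finset.image (fun g => g * r * g⁻¹) Finset.univ

/-- The centralizer `Z(r)` of `r` in `G`, as a `Finset`. -/
def centFinset {G : Type*} [Group G] [Fintype G] (r : G) : Finset G :=
  Finset.univ.filter fun z => z * r = r * z

/-- `ρ : G → Matrix (Fin d) (Fin d) ℂ` restricts to a unitary representation of the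
centralizer `Z(r)`. -/
def IsCentRep {G : Type*} [Group G] [Fintype G] (r : G) {d : ℕ}
    (ρ : G → Matrix (Fin d) (Fin d) ℂ) : Prop :=
  ρ 1 = 1 ∧
  (∀ z w : G, z * r = r * z → w * r = r * w → ρ (z * w) = ρ z * ρ w) ∧
  (∀ z : G, z * r = r * z → ρ z ∈ Matrix.unitaryGroup (Fin d) ℂ)

/-- `ρ` restricts to an irreducible unitary representation of `Z(r)` (the commutant of the
image consists of scalar matrices). -/
def IsCentIrrep {G : Type*} [Group G] [Fintype G] (r : G) {d : ℕ}
    (ρ : G → Matrix (Fin d) (Fin d) ℂ) : Prop :=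
  IsCentRep r ρ ∧
  ∀ M : Matrix (Fin d) (Fin d) ℂ,
    (∀ z : G, z * r = r * z → M * ρ z = ρ z * M) →
    ∃ c : ℂ, M = c • (1 : Matrix (Fin d) (Fin d) ℂ)

/-- Isomorphism of two representations of the centralizer `Z(r)`, given by an invertible
intertwiner. -/
def RepIsoOn {G : Type*} [Group G] [Fintype G] (r : G) {d₁ d₂ : ℕ}
    (ρ₁ : G → Matrix (Fin d₁) (Fin d₁) ℂ) (ρ₂ : G → Matrix (Fin d₂) (Fin d₂) ℂ) : Prop :=
  ∃ (U : Matrix (Fin d₁) (Fin d₂) ℂ) (V : Matrix (Fin d₂) (Fin d₁) ℂ),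
    U * V = 1 ∧ V * U = 1 ∧ ∀ z : G, z * r = r * z → ρ₁ z * U = U * ρ₂ z

/-- The diagonal probing operator
`P^{[C,R]}_{m,c} := (|C|·d_R/|G|)·Σ_{z∈Z(r)} conj(ρ^R_{mm}(z))·F^{c, p(c)·z·p(c)⁻¹}`. -/
def Pdiag {G : Type*} [Group G] [Fintype G] (r : G) (p : G → G) {d : ℕ}
    (ρ : G → Matrix (Fin d) (Fin d) ℂ) (m : Fin d) (c : G) : G × G → ℂ :=
  ((((conjClass r).card : ℂ) * (d : ℂ)) / (Fintype.card G : ℂ)) •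
    ∑ z ∈ centFinset r, (starRingEnd ℂ) (ρ z m m) • Fgh c (p c * z * (p c)⁻¹)

open Finset

section Centralizer

variable {G : Type*} [Group G] [Fintype G] {r : G}

theorem mem_centFinset {z : G} : z ∈ centFinset r ↔ z * r = r * z := by
  simp [centFinset]

theorem mem_centFinset_iff_mem_centralizer {z : G} :
    z ∈ centFinset r ↔ z ∈ Subgroup.centralizer {r} := by
  rw [mem_centFinset, Subgroup.mem_centralizer_singleton_iff]

theorem mul_mem_centFinset {z w : G} (hz : z ∈ centFinset r) (hw : w ∈ centFinset r) :
    z * w ∈ centFinset r := by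
  simp only [mem_centFinset_iff_mem_centralizer] at *
  exact mul_mem hz hw

theorem inv_mem_centFinset {z : G} (hz : z ∈ centFinset r) : z⁻¹ ∈ centFinset r := by
  simp only [mem_centFinset_iff_mem_centralizer] at *
  exact inv_mem hz

theorem sum_centFinset_mul_left {M : Type*} [AddCommMonoid M] {z : G} (hz : z ∈ centFinset r)
    (f : G → M) : ∑ w ∈ centFinset r, f (z * w) = ∑ u ∈ centFinset r, f u :=
  sum_nbij' (z * ·) (z⁻¹ * ·) (fun _ hw => mul_mem_centFinset hz hw)
    (fun _ hu => mul_mem_centFinset (inv_mem_centFinset hz) hu)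
    (fun _ _ => inv_mul_cancel_left z _) (fun _ _ => mul_inv_cancel_left z _) (fun _ _ => rfl)

theorem mem_conjClass_iff {x : G} : x ∈ conjClass r ↔ IsConj r x := by
  simp [conjClass, isConj_iff]

theorem conjClass_eq_of_mem_of_mem {r₁ r₂ c : G} (h₁ : c ∈ conjClass r₁)
    (h₂ : c ∈ conjClass r₂) : conjClass r₁ = conjClass r₂ := by
  rw [mem_conjClass_iff] at h₁ h₂
  ext x
  simp only [mem_conjClass_iff]
  exact ⟨(h₂.trans h₁.symm).trans, (h₁.trans h₂.symm).trans⟩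

theorem card_conjClass_mul_card_centFinset (r : G) :
    #(conjClass r) * #(centFinset r) = Fintype.card G := by
  -- The fibre of `g ↦ g r g⁻¹` over `g₀ r g₀⁻¹` is the coset `g₀ Z(r)`.
  have fiber : ∀ c ∈ conjClass r, #{g | g * r * g⁻¹ = c} = #(centFinset r) := by
    intro c hc
    obtain ⟨g₀, -, rfl⟩ := mem_image.mp hc
    refine card_nbij' (g₀⁻¹ * ·) (g₀ * ·) (fun g hg => ?_) (fun z hz => ?_)
      (fun _ _ => mul_inv_cancel_left g₀ _) (fun _ _ => inv_mul_cancel_left g₀ _)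
    · simp only [coe_filter, mem_univ, true_and, Set.mem_ofPred_eq, mem_coe, mem_centFinset] at hg ⊢
      calc g₀⁻¹ * g * r = g₀⁻¹ * (g * r * g⁻¹) * g := by group
        _ = r * (g₀⁻¹ * g) := by rw [hg]; group
    · simp only [coe_filter, mem_univ, true_and, Set.mem_ofPred_eq, mem_coe, mem_centFinset] at hz ⊢
      simp [mul_assoc, hz]
  calc #(conjClass r) * #(centFinset r) = ∑ c ∈ conjClass r, #{g | g * r * g⁻¹ = c} := by
        rw [sum_congr rfl fiber, sum_const, smul_eq_mul]
    _ = Fintype.card G :=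
        (card_eq_sum_card_fiberwise fun g _ => mem_image_of_mem _ (mem_univ g)).symm

end Centralizer

section RibbonAlgebra

variable {G : Type*} [Group G] [Fintype G]

theorem rmul_Fgh (g₁ h₁ g₂ h₂ : G) :
    rmul (Fgh g₁ h₁) (Fgh g₂ h₂) = if g₁ = g₂ then Fgh g₁ (h₁ * h₂) else 0 := by
  ext ⟨a, b⟩
  rw [rmul, Fintype.sum_eq_single h₁ fun c hc => by simp [Fgh, hc]]
  by_cases hg : g₁ = g₂
  · subst hg; by_cases ha : a = g₁ <;> simp [Fgh, ha, inv_mul_eq_iff_eq_mul]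
  · by_cases ha : a = g₁ <;> simp [Fgh, ha, hg]

def rmulBilin : (G × G → ℂ) →ₗ[ℂ] (G × G → ℂ) →ₗ[ℂ] G × G → ℂ :=
  LinearMap.mk₂ ℂ rmul
    (fun f₁ f₂ g => by ext x; simp [rmul, add_mul, sum_add_distrib])
    (fun a f g => by ext x; simp [rmul, mul_sum, mul_assoc])
    (fun f g₁ g₂ => by ext x; simp [rmul, mul_add, sum_add_distrib])
    (fun a f g => by ext x; simp [rmul, mul_sum, mul_left_comm])

theorem rmulBilin_apply (f g : G × G → ℂ) : rmulBilin f g = rmul f g := rfl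

theorem rmul_smul_smul (a b : ℂ) (f g : G × G → ℂ) :
    rmul (a • f) (b • g) = (a * b) • rmul f g := by
  simp only [← rmulBilin_apply, map_smul, LinearMap.smul_apply, smul_smul, mul_comm]

def groupAlgEmbed (r c q : G) (f : G → ℂ) : G × G → ℂ :=
  ∑ z ∈ centFinset r, f z • Fgh c (q * z * q⁻¹)

def centConv (r : G) (f g : G → ℂ) (u : G) : ℂ :=
  ∑ z ∈ centFinset r, f z * g (z⁻¹ * u)

theorem rmul_groupAlgEmbed_sum (r₁ r₂ c₁ c₂ q₁ q₂ : G) (f₁ f₂ : G → ℂ) :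
    rmul (groupAlgEmbed r₁ c₁ q₁ f₁) (groupAlgEmbed r₂ c₂ q₂ f₂) =
      ∑ z ∈ centFinset r₁, ∑ w ∈ centFinset r₂,
        (f₁ z * f₂ w) • rmul (Fgh c₁ (q₁ * z * q₁⁻¹)) (Fgh c₂ (q₂ * w * q₂⁻¹)) := by
  simp only [groupAlgEmbed, ← rmulBilin_apply, map_sum, map_smul, LinearMap.sum_apply,
    LinearMap.smul_apply, smul_sum, smul_smul]
  rw [sum_comm]
  simp only [mul_comm]

theorem rmul_groupAlgEmbed_of_ne {r₁ r₂ c₁ c₂ : G} (q₁ q₂ : G) (f₁ f₂ : G → ℂ) (h : c₁ ≠ c₂) :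
    rmul (groupAlgEmbed r₁ c₁ q₁ f₁) (groupAlgEmbed r₂ c₂ q₂ f₂) = 0 := by
  simp [rmul_groupAlgEmbed_sum, rmul_Fgh, h]

theorem rmul_groupAlgEmbed (r c q : G) (f g : G → ℂ) :
    rmul (groupAlgEmbed r c q f) (groupAlgEmbed r c q g) =
      groupAlgEmbed r c q (centConv r f g) := by
  rw [rmul_groupAlgEmbed_sum, groupAlgEmbed]
  simp only [centConv, sum_smul]
  conv_rhs => rw [sum_comm]
  refine sum_congr rfl fun z hz => ?_
  conv_rhs => rw [← sum_centFinset_mul_left hz]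
  refine sum_congr rfl fun w _ => ?_
  rw [rmul_Fgh, if_pos rfl, inv_mul_cancel_left]
  congr 2
  group

end RibbonAlgebra

theorem Matrix.mul_single_one_mul_apply {l m n o α : Type*} [Fintype m] [Fintype n]
    [DecidableEq m] [DecidableEq n] [NonAssocSemiring α]
    (A : Matrix l m α) (B : Matrix n o α) (i : m) (j : n) (a : l) (b : o) :
    (A * Matrix.single i j (1 : α) * B) a b = A a i * B j b := by
  simp [Matrix.mul_apply, Matrix.single, ite_and]

section Representations

open scoped Matrix ComplexOrder

variable {G : Type*} [Group G] [Fintype G] {r : G} {d d₁ d₂ : ℕ}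
  {ρ : G → Matrix (Fin d) (Fin d) ℂ} {ρ₁ : G → Matrix (Fin d₁) (Fin d₁) ℂ}
  {ρ₂ : G → Matrix (Fin d₂) (Fin d₂) ℂ}

theorem IsCentRep.map_mul (hρ : IsCentRep r ρ) {z w : G} (hz : z ∈ centFinset r)
    (hw : w ∈ centFinset r) : ρ (z * w) = ρ z * ρ w :=
  hρ.2.1 z w (mem_centFinset.1 hz) (mem_centFinset.1 hw)

theorem IsCentRep.map_inv_mul_self (hρ : IsCentRep r ρ) {z : G} (hz : z ∈ centFinset r) :
    ρ z⁻¹ * ρ z = 1 := by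
  rw [← hρ.map_mul (inv_mem_centFinset hz) hz, inv_mul_cancel, hρ.1]

theorem IsCentRep.map_inv (hρ : IsCentRep r ρ) {z : G} (hz : z ∈ centFinset r) :
    ρ z⁻¹ = (ρ z)ᴴ :=
  (Matrix.inv_eq_left_inv (hρ.map_inv_mul_self hz)).symm.trans
    (Matrix.inv_eq_left_inv (Matrix.mem_unitaryGroup_iff'.1 (hρ.2.2 z (mem_centFinset.1 hz))))

theorem IsCentRep.intertwines_conjTranspose (hρ₁ : IsCentRep r ρ₁) (hρ₂ : IsCentRep r ρ₂)
    {T : Matrix (Fin d₁) (Fin d₂) ℂ} (hT : ∀ z : G, z * r = r * z → ρ₁ z * T = T * ρ₂ z)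
    (z : G) (hz : z * r = r * z) : ρ₂ z * Tᴴ = Tᴴ * ρ₁ z := by
  have hz' := mem_centFinset.2 hz
  have h := congrArg Matrix.conjTranspose (hT z⁻¹ (mem_centFinset.1 (inv_mem_centFinset hz')))
  rwa [Matrix.conjTranspose_mul, Matrix.conjTranspose_mul, hρ₁.map_inv hz', hρ₂.map_inv hz',
    Matrix.conjTranspose_conjTranspose, Matrix.conjTranspose_conjTranspose, eq_comm] at h

theorem IsCentIrrep.eq_zero_of_intertwines (h₁ : IsCentIrrep r ρ₁) (h₂ : IsCentIrrep r ρ₂)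
    (hni : ¬ RepIsoOn r ρ₁ ρ₂) {T : Matrix (Fin d₁) (Fin d₂) ℂ}
    (hT : ∀ z : G, z * r = r * z → ρ₁ z * T = T * ρ₂ z) : T = 0 := by
  by_contra hT0
  have hTstar := h₁.1.intertwines_conjTranspose h₂.1 hT
  obtain ⟨a, ha⟩ := h₁.2 (T * Tᴴ) fun z hz => by
    rw [Matrix.mul_assoc, ← hTstar z hz, ← Matrix.mul_assoc, ← hT z hz, Matrix.mul_assoc]
  obtain ⟨b, hb⟩ := h₂.2 (Tᴴ * T) fun z hz => by
    rw [Matrix.mul_assoc, ← hT z hz, ← Matrix.mul_assoc, ← hTstar z hz, Matrix.mul_assoc]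
  have ha0 : a ≠ 0 := by
    rintro rfl
    exact hT0 (Matrix.self_mul_conjTranspose_eq_zero.1 (by rw [ha, zero_smul]))
  -- `Tᴴ * T * Tᴴ` computed in two ways forces the two scalars to agree, so `a⁻¹ • Tᴴ` inverts `T`.
  have hba : b = a := by
    refine smul_left_injective ℂ (fun h => hT0 (Matrix.conjTranspose_eq_zero.1 h)) ?_
    calc b • Tᴴ = Tᴴ * T * Tᴴ := by rw [hb, Matrix.smul_mul, Matrix.one_mul]
      _ = a • Tᴴ := by rw [Matrix.mul_assoc, ha, Matrix.mul_smul, Matrix.mul_one]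
  refine hni ⟨T, a⁻¹ • Tᴴ, ?_, ?_, hT⟩
  · rw [Matrix.mul_smul, ha, smul_smul, inv_mul_cancel₀ ha0, one_smul]
  · rw [Matrix.smul_mul, hb, hba, smul_smul, inv_mul_cancel₀ ha0, one_smul]

variable (r ρ₁ ρ₂) in
def avgIntertwiner (A : Matrix (Fin d₁) (Fin d₂) ℂ) : Matrix (Fin d₁) (Fin d₂) ℂ :=
  ∑ z ∈ centFinset r, ρ₁ z * A * ρ₂ z⁻¹

theorem avgIntertwiner_intertwines (hρ₁ : IsCentRep r ρ₁) (hρ₂ : IsCentRep r ρ₂)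
    (A : Matrix (Fin d₁) (Fin d₂) ℂ) (w : G) (hw : w * r = r * w) :
    ρ₁ w * avgIntertwiner r ρ₁ ρ₂ A = avgIntertwiner r ρ₁ ρ₂ A * ρ₂ w := by
  have hw' := mem_centFinset.2 hw
  rw [avgIntertwiner, Matrix.mul_sum, Matrix.sum_mul]
  conv_rhs => rw [← sum_centFinset_mul_left hw']
  refine sum_congr rfl fun z hz => ?_
  have hwz := mul_mem_centFinset hw' hz
  rw [Matrix.mul_assoc _ (ρ₂ _), ← hρ₂.map_mul (inv_mem_centFinset hwz) hw',
    show (w * z)⁻¹ * w = z⁻¹ by group, hρ₁.map_mul hw' hz]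
  simp only [Matrix.mul_assoc]

theorem trace_avgIntertwiner (hρ : IsCentRep r ρ) (A : Matrix (Fin d) (Fin d) ℂ) :
    (avgIntertwiner r ρ ρ A).trace = #(centFinset r) * A.trace := by
  rw [avgIntertwiner, Matrix.trace_sum, ← nsmul_eq_mul, ← sum_const]
  refine sum_congr rfl fun z hz => ?_
  rw [Matrix.trace_mul_cycle, hρ.map_inv_mul_self hz, Matrix.one_mul]

theorem avgIntertwiner_single_mul_apply (hρ₂ : IsCentRep r ρ₂) (i a : Fin d₁) (j b : Fin d₂)
    {u : G} (hu : u ∈ centFinset r) :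
    (avgIntertwiner r ρ₁ ρ₂ (Matrix.single i j 1) * ρ₂ u) a b =
      centConv r (fun z => ρ₁ z a i) (fun z => ρ₂ z j b) u := by
  rw [avgIntertwiner, Matrix.sum_mul, Matrix.sum_apply]
  refine sum_congr rfl fun z hz => ?_
  rw [Matrix.mul_assoc, ← hρ₂.map_mul (inv_mem_centFinset hz) hu, Matrix.mul_single_one_mul_apply]

theorem IsCentIrrep.centConv_coeff_eq_zero (h₁ : IsCentIrrep r ρ₁) (h₂ : IsCentIrrep r ρ₂)
    (hni : ¬ RepIsoOn r ρ₁ ρ₂) (i j : Fin d₁) (k l : Fin d₂) {u : G} (hu : u ∈ centFinset r) :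
    centConv r (fun z => ρ₁ z i j) (fun z => ρ₂ z k l) u = 0 := by
  rw [← avgIntertwiner_single_mul_apply h₂.1 _ _ _ _ hu,
    h₁.eq_zero_of_intertwines h₂ hni (avgIntertwiner_intertwines h₁.1 h₂.1 _), Matrix.zero_mul,
    Matrix.zero_apply]

theorem IsCentIrrep.centConv_coeff (hρ : IsCentIrrep r ρ) (i j k l : Fin d) {u : G}
    (hu : u ∈ centFinset r) :
    centConv r (fun z => ρ z i j) (fun z => ρ z k l) u =
      (if j = k then (#(centFinset r) : ℂ) / d else 0) * ρ u i l := by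
  obtain ⟨s, hs⟩ := hρ.2 (avgIntertwiner r ρ ρ (Matrix.single j k 1))
    fun z hz => (avgIntertwiner_intertwines hρ.1 hρ.1 _ z hz).symm
  have htrace := trace_avgIntertwiner hρ.1 (Matrix.single j k 1)
  rw [hs, Matrix.trace_smul, Matrix.trace_one, Fintype.card_fin, smul_eq_mul] at htrace
  have hd : (d : ℂ) ≠ 0 := Nat.cast_ne_zero.2 i.pos.ne'
  have hs' : s = if j = k then (#(centFinset r) : ℂ) / d else 0 := by
    split_ifs with hjk
    · rw [hjk, Matrix.trace_single_eq_same, mul_one] at htrace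
      exact eq_div_of_mul_eq hd htrace
    · rw [Matrix.trace_single_eq_of_ne _ _ _ hjk, mul_zero] at htrace
      exact (mul_eq_zero.1 htrace).resolve_right hd
  rw [← avgIntertwiner_single_mul_apply hρ.1 _ _ _ _ hu, hs, hs', Matrix.smul_mul,
    Matrix.one_mul, Matrix.smul_apply, smul_eq_mul]

end Representations

section Probing

open ComplexConjugate

variable {G : Type*} [Group G] [Fintype G] {r : G} {d d₁ d₂ : ℕ}

theorem groupAlgEmbed_congr {c q : G} {f g : G → ℂ} (h : ∀ z ∈ centFinset r, f z = g z) :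
    groupAlgEmbed r c q f = groupAlgEmbed r c q g :=
  sum_congr rfl fun z hz => by rw [h z hz]

theorem groupAlgEmbed_const_mul (c q : G) (a : ℂ) (f : G → ℂ) :
    groupAlgEmbed r c q (fun z => a * f z) = a • groupAlgEmbed r c q f := by
  simp only [groupAlgEmbed, smul_sum, mul_smul]

theorem groupAlgEmbed_zero (c q : G) : groupAlgEmbed r c q 0 = 0 := by
  simp [groupAlgEmbed]

theorem centConv_conj (f g : G → ℂ) (u : G) :
    centConv r (fun z => conj (f z)) (fun z => conj (g z)) u = conj (centConv r f g u) := by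
  simp [centConv]

theorem Pdiag_eq_smul_groupAlgEmbed (p : G → G) (ρ : G → Matrix (Fin d) (Fin d) ℂ)
    (m : Fin d) (c : G) :
    Pdiag r p ρ m c = ((#(conjClass r) : ℂ) * d / Fintype.card G) •
      groupAlgEmbed r c (p c) (fun z => conj (ρ z m m)) := rfl

theorem rmul_Pdiag_of_ne {r₁ r₂ : G} (p₁ p₂ : G → G) (ρ₁ : G → Matrix (Fin d₁) (Fin d₁) ℂ)
    (ρ₂ : G → Matrix (Fin d₂) (Fin d₂) ℂ) (m₁ : Fin d₁) (m₂ : Fin d₂) {c₁ c₂ : G}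
    (h : c₁ ≠ c₂) : rmul (Pdiag r₁ p₁ ρ₁ m₁ c₁) (Pdiag r₂ p₂ ρ₂ m₂ c₂) = 0 := by
  rw [Pdiag_eq_smul_groupAlgEmbed, Pdiag_eq_smul_groupAlgEmbed, rmul_smul_smul,
    rmul_groupAlgEmbed_of_ne _ _ _ _ h, smul_zero]

theorem rmul_Pdiag_of_not_repIsoOn (p : G → G) {ρ₁ : G → Matrix (Fin d₁) (Fin d₁) ℂ}
    {ρ₂ : G → Matrix (Fin d₂) (Fin d₂) ℂ} (h₁ : IsCentIrrep r ρ₁) (h₂ : IsCentIrrep r ρ₂)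
    (hni : ¬ RepIsoOn r ρ₁ ρ₂) (m₁ : Fin d₁) (m₂ : Fin d₂) (c : G) :
    rmul (Pdiag r p ρ₁ m₁ c) (Pdiag r p ρ₂ m₂ c) = 0 := by
  rw [Pdiag_eq_smul_groupAlgEmbed, Pdiag_eq_smul_groupAlgEmbed, rmul_smul_smul,
    rmul_groupAlgEmbed, groupAlgEmbed_congr (g := 0), groupAlgEmbed_zero, smul_zero]
  intro u hu
  rw [centConv_conj, h₁.centConv_coeff_eq_zero h₂ hni _ _ _ _ hu, map_zero, Pi.zero_apply]

theorem rmul_Pdiag_self (p : G → G) {ρ : G → Matrix (Fin d) (Fin d) ℂ} (hρ : IsCentIrrep r ρ)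
    (m₁ m₂ : Fin d) (c₁ c₂ : G) :
    rmul (Pdiag r p ρ m₁ c₁) (Pdiag r p ρ m₂ c₂) =
      (if c₁ = c₂ ∧ m₁ = m₂ then (1 : ℂ) else 0) • Pdiag r p ρ m₁ c₁ := by
  by_cases hc : c₁ = c₂
  swap
  · rw [rmul_Pdiag_of_ne p p ρ ρ m₁ m₂ hc, if_neg fun h => hc h.1, zero_smul]
  subst hc
  have hconv : ∀ u ∈ centFinset r,
      centConv r (fun z => conj (ρ z m₁ m₁)) (fun z => conj (ρ z m₂ m₂)) u =
        (if m₁ = m₂ then (#(centFinset r) : ℂ) / d else 0) * conj (ρ u m₁ m₁) := by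
    intro u hu
    rw [centConv_conj, hρ.centConv_coeff _ _ _ _ hu, map_mul]
    split_ifs with hm
    · subst hm; simp
    · simp
  rw [Pdiag_eq_smul_groupAlgEmbed, Pdiag_eq_smul_groupAlgEmbed, rmul_smul_smul,
    rmul_groupAlgEmbed, groupAlgEmbed_congr hconv, groupAlgEmbed_const_mul, smul_smul]
  simp only [true_and]
  split_ifs with hm
  · have hd : (d : ℂ) ≠ 0 := Nat.cast_ne_zero.2 m₁.pos.ne'
    have hG : (Fintype.card G : ℂ) ≠ 0 := Nat.cast_ne_zero.2 Fintype.card_ne_zero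
    have hcard : (#(conjClass r) : ℂ) * #(centFinset r) = Fintype.card G := by
      exact_mod_cast card_conjClass_mul_card_centFinset r
    rw [one_smul]
    congr 1
    field_simp
    linear_combination (#(conjClass r) : ℂ) * hcard
  · rw [mul_zero, zero_smul, zero_smul]

end Probing

theorem probing_operators_orthogonal_general (G : Type*) [Group G] [Fintype G]
    (r₁ r₂ : G) (p₁ p₂ : G → G)
    (hcoh : conjClass r₁ = conjClass r₂ → r₁ = r₂ ∧ p₁ = p₂)
    {d₁ d₂ : ℕ}
    (ρ₁ : G → Matrix (Fin d₁) (Fin d₁) ℂ) (ρ₂ : G → Matrix (Fin d₂) (Fin d₂) ℂ)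
    (hρ₁ : IsCentIrrep r₁ ρ₁) (hρ₂ : IsCentIrrep r₂ ρ₂)
    (m₁ : Fin d₁) (m₂ : Fin d₂) (c₁ c₂ : G)
    (hc₁ : c₁ ∈ conjClass r₁) (hc₂ : c₂ ∈ conjClass r₂) :
    -- (i) different classes, different class elements, or non-isomorphic representations
    ((conjClass r₁ ≠ conjClass r₂ ∨ c₁ ≠ c₂ ∨ ¬ RepIsoOn r₁ ρ₁ ρ₂) →
      rmul (Pdiag r₁ p₁ ρ₁ m₁ c₁) (Pdiag r₂ p₂ ρ₂ m₂ c₂) = 0) ∧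
    -- (ii) same class and same representation
    (∀ (m₁' m₂' : Fin d₁) (c₁' c₂' : G), c₁' ∈ conjClass r₁ → c₂' ∈ conjClass r₁ →
      rmul (Pdiag r₁ p₁ ρ₁ m₁' c₁') (Pdiag r₁ p₁ ρ₁ m₂' c₂') =
        (if c₁' = c₂' ∧ m₁' = m₂' then (1 : ℂ) else 0) • Pdiag r₁ p₁ ρ₁ m₁' c₁') ∧
    -- in particular, each diagonal probing operator is idempotent
    (∀ (m : Fin d₁) (c : G), c ∈ conjClass r₁ →
      rmul (Pdiag r₁ p₁ ρ₁ m c) (Pdiag r₁ p₁ ρ₁ m c) = Pdiag r₁ p₁ ρ₁ m c) := by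
  refine ⟨fun h => ?_, fun m₁' m₂' c₁' c₂' _ _ => rmul_Pdiag_self p₁ hρ₁ m₁' m₂' c₁' c₂',
    fun m c _ => by rw [rmul_Pdiag_self p₁ hρ₁, if_pos ⟨rfl, rfl⟩, one_smul]⟩
  by_cases hc : c₁ = c₂
  · subst hc
    have hC := conjClass_eq_of_mem_of_mem hc₁ hc₂
    obtain ⟨rfl, rfl⟩ := hcoh hC
    exact rmul_Pdiag_of_not_repIsoOn p₁ hρ₁ hρ₂ (by simpa using h) m₁ m₂ c₁
  · exact rmul_Pdiag_of_ne p₁ p₂ ρ₁ ρ₂ m₁ m₂ hc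

/-- Orthogonality and idempotency of the diagonal probing operators. -/
theorem probing_operators_orthogonal (G : Type*) [Group G] [Fintype G]
    (r₁ r₂ : G) (p₁ p₂ : G → G)
    (hp₁ : ∀ c ∈ conjClass r₁, p₁ c * r₁ * (p₁ c)⁻¹ = c)
    (hp₂ : ∀ c ∈ conjClass r₂, p₂ c * r₂ * (p₂ c)⁻¹ = c)
    (hcoh : conjClass r₁ = conjClass r₂ → r₁ = r₂ ∧ p₁ = p₂)
    {d₁ d₂ : ℕ}
    (ρ₁ : G → Matrix (Fin d₁) (Fin d₁) ℂ) (ρ₂ : G → Matrix (Fin d₂) (Fin d₂) ℂ)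
    (hρ₁ : IsCentIrrep r₁ ρ₁) (hρ₂ : IsCentIrrep r₂ ρ₂)
    (m₁ : Fin d₁) (m₂ : Fin d₂) (c₁ c₂ : G)
    (hc₁ : c₁ ∈ conjClass r₁) (hc₂ : c₂ ∈ conjClass r₂) :
    -- (i) different classes, different class elements, or non-isomorphic representations
    ((conjClass r₁ ≠ conjClass r₂ ∨ c₁ ≠ c₂ ∨ ¬ RepIsoOn r₁ ρ₁ ρ₂) →
      rmul (Pdiag r₁ p₁ ρ₁ m₁ c₁) (Pdiag r₂ p₂ ρ₂ m₂ c₂) = 0) ∧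
    -- (ii) same class and same representation
    (∀ (m₁' m₂' : Fin d₁) (c₁' c₂' : G), c₁' ∈ conjClass r₁ → c₂' ∈ conjClass r₁ →
      rmul (Pdiag r₁ p₁ ρ₁ m₁' c₁') (Pdiag r₁ p₁ ρ₁ m₂' c₂') =
        (if c₁' = c₂' ∧ m₁' = m₂' then (1 : ℂ) else 0) • Pdiag r₁ p₁ ρ₁ m₁' c₁') ∧
    -- in particular, each diagonal probing operator is idempotent
    (∀ (m : Fin d₁) (c : G), c ∈ conjClass r₁ →
      rmul (Pdiag r₁ p₁ ρ₁ m c) (Pdiag r₁ p₁ ρ₁ m c) = Pdiag r₁ p₁ ρ₁ m c) :=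
  probing_operators_orthogonal_general G r₁ r₂ p₁ p₂ hcoh ρ₁ ρ₂ hρ₁ hρ₂ m₁ m₂ c₁ c₂ hc₁ hc₂

end
end
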